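/- There is a constant C > 0 with the following property (CKR partitioning). For every finite metric space (V, dist) and every subset T ⊆ V with |T| = k ≥ 2, there exists a (finitely supported) probability distribution over maps g : V → T such that: (a) almost surely g(t) = t for all t ∈ T; (b) almost surely dist(u, g(u)) ≤ 2·dist(u, T) for all u ∈ V, where dist(u,T) = min_{t∈T} dist(u,t); and (c) for all u, v ∈ V, Pr[g(u) ≠ g(v)] · (dist(u,T) + dist(v,T)) ≤ C · log k · dist(u,v). -/

import Mathlib

open scoped BigOperators

/-- `dist` is a metric on `V`. -/
def IsMetric {V : Type*} (dist : V → V → ℝ) : Prop :=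
  (∀ x, dist x x = 0) ∧ (∀ x y, 0 ≤ dist x y) ∧ (∀ x y, dist x y = dist y x) ∧
  (∀ x y z, dist x z ≤ dist x y + dist y z) ∧ (∀ x y, dist x y = 0 → x = y)

/-!
Rank the terminals by a uniformly random bijection `σ : T ≃ Fin k`, draw a radius `r` uniformly
from the grid `1 + i / M` (`i < M`) in `[1, 2)`, and send `u` to the `σ`-first terminal within
distance `r · dist(u, T)` of `u`. Terminals are fixed and `u` moves at most `2 · dist(u, T)`.

If `u` and `v` are sent to different terminals, the `σ`-earlier of the two, say `t`, is captured
by `u` but not by `v`, and `t` is `σ`-first among the terminals at least as close to `u` as `t`.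
The second event has probability `1 / rank_u(t)`; when `dist(u,T) + dist(v,T) > 8 dist(u,v)`
(otherwise the trivial bound `Pr ≤ 1` suffices) the first one confines `r` to an interval of length
`O(dist(u,v) / (dist(u,T) + dist(v,T)))`. Summing over `t` gives a harmonic number
`H_k ≤ 3 log k`. The grid is so fine that `M · dist(u,v) ≥ dist(u,T) + dist(v,T)` for `u ≠ v`,
which absorbs its rounding error.
-/

open Finset

section UniformLaw

variable {Ω X : Type*} [Fintype Ω]

open Classical in
noncomputable def uniformLaw (G : Ω → X) (x : X) : ℝ :=
  #{ω | G ω = x} / Fintype.card Ω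

lemma uniformLaw_nonneg (G : Ω → X) (x : X) : 0 ≤ uniformLaw G x := by
  unfold uniformLaw; positivity

lemma exists_eq_of_uniformLaw_ne_zero {G : Ω → X} {x : X} (h : uniformLaw G x ≠ 0) :
    ∃ ω, G ω = x := by
  classical
  by_contra! hx
  simp [uniformLaw, hx] at h

lemma sum_filter_uniformLaw [Fintype X] (G : Ω → X) (P : X → Prop) [DecidablePred P] :
    ∑ x with P x, uniformLaw G x = #{ω | P (G ω)} / Fintype.card Ω := by
  classical
  simp only [uniformLaw, ← sum_div]
  rw [card_eq_sum_card_fiberwise (f := G) (t := {x | P x}) fun ω => by simp]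
  push_cast
  refine congrArg (· / _) (sum_congr rfl fun x hx => ?_)
  rw [filter_filter]
  congr 2
  ext ω
  simp_all

lemma sum_uniformLaw [Nonempty Ω] [Fintype X] (G : Ω → X) : ∑ x, uniformLaw G x = 1 := by
  simpa [Fintype.card_ne_zero] using sum_filter_uniformLaw G (fun _ => True)

end UniformLaw

section Ranking

variable {α : Type*} [Fintype α] [DecidableEq α] {n : ℕ}

lemma card_filter_forall_le_mul_card_le (B : Finset α) {t : α} (ht : t ∈ B) :
    #{σ : α ≃ Fin n | ∀ s ∈ B, σ t ≤ σ s} * #B ≤ Fintype.card (α ≃ Fin n) := by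
  set E : α → Finset (α ≃ Fin n) := fun b => {σ | ∀ s ∈ B, σ b ≤ σ s}
  -- precomposing with a transposition moves `σ`-first place from `t` to `b`
  have hle : ∀ b ∈ B, #(E t) ≤ #(E b) := by
    intro b hb
    refine card_le_card_of_injOn (fun σ => (Equiv.swap t b).trans σ) (fun σ hσ => ?_)
      fun σ _ τ _ h => Equiv.ext fun x => by
        simpa using DFunLike.congr_fun h (Equiv.swap t b x)
    simp only [E, coe_filter, Set.mem_ofPred_eq, mem_univ, true_and] at hσ ⊢
    intro s hs
    simpa using hσ (Equiv.swap t b s) (by rw [Equiv.swap_apply_def]; split_ifs <;> assumption)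
  have hdisj : (B : Set α).PairwiseDisjoint E := fun b hb b' hb' hne =>
    disjoint_left.mpr fun σ hσ hσ' => by
      simp only [E, mem_filter, mem_univ, true_and] at hσ hσ'
      exact hne (σ.injective ((hσ _ hb').antisymm (hσ' _ hb)))
  calc #(E t) * #B = ∑ _b ∈ B, #(E t) := by rw [sum_const, smul_eq_mul, mul_comm]
    _ ≤ ∑ b ∈ B, #(E b) := sum_le_sum hle
    _ = #(B.biUnion E) := (card_biUnion hdisj).symm
    _ ≤ Fintype.card (α ≃ Fin n) := card_le_univ _

end Ranking

lemma sum_inv_card_filter_le_harmonic {α : Type*} [DecidableEq α] (f : α → ℝ) (S : Finset α) :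
    ∑ t ∈ S, (#{s ∈ S | f s ≤ f t} : ℝ)⁻¹ ≤ harmonic #S := by
  induction S using Finset.induction_on_max_value f with
  | empty => simp
  | insert a S ha hmax ih =>
    rw [sum_insert ha, card_insert_of_notMem ha, harmonic_succ, add_comm]
    push_cast
    gcongr ?_ + ?_
    · refine ih.trans' (sum_le_sum fun t ht => ?_)
      have hpos : 0 < #{s ∈ S | f s ≤ f t} := card_pos.mpr ⟨t, by simp [ht]⟩
      exact inv_anti₀ (by exact_mod_cast hpos)
        (by exact_mod_cast card_le_card (filter_subset_filter _ (subset_insert a S)))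
    · rw [filter_true_of_mem fun s hs => ?_, card_insert_of_notMem ha]
      · push_cast; rfl
      · rcases mem_insert.mp hs with rfl | hs
        exacts [le_rfl, hmax s hs]

lemma harmonic_le_three_mul_log {k : ℕ} (hk : 2 ≤ k) : (harmonic k : ℝ) ≤ 3 * Real.log k := by
  have hlog : Real.log 2 ≤ Real.log k := Real.log_le_log two_pos (by exact_mod_cast hk)
  linarith [harmonic_le_one_add_log k, Real.log_two_gt_d9]

lemma card_le_of_forall_mem_Ico {s : Finset ℕ} (hs : s.Nonempty) {x y : ℝ}
    (h : ∀ i ∈ s, x ≤ i ∧ (i : ℝ) < y) : (#s : ℝ) ≤ y - x + 1 := by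
  have hsub : s ⊆ Icc (s.min' hs) (s.max' hs) := fun i hi =>
    mem_Icc.mpr ⟨min'_le s i hi, le_max' s i hi⟩
  have hcard : #s ≤ s.max' hs + 1 - s.min' hs := (card_le_card hsub).trans_eq (Nat.card_Icc _ _)
  have hminmax : s.min' hs ≤ s.max' hs := min'_le_max' s hs
  have hx := (h _ (min'_mem s hs)).1
  have hy := (h _ (max'_mem s hs)).2
  have : (#s : ℝ) + s.min' hs ≤ s.max' hs + 1 := by exact_mod_cast (by omega)
  linarith

namespace CKR

noncomputable def radius (M : ℕ) (i : Fin M) : ℝ := 1 + i / M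

lemma one_le_radius {M : ℕ} (i : Fin M) : 1 ≤ radius M i :=
  le_add_of_nonneg_right (by positivity)

lemma radius_lt_two {M : ℕ} (i : Fin M) : radius M i < 2 := by
  have hM : (0 : ℝ) < M := by exact_mod_cast i.pos
  have : (i : ℝ) / M < 1 := (div_lt_one hM).mpr (by exact_mod_cast i.isLt)
  unfold radius; linarith

lemma card_le_of_forall_radius_mem_Ico {M : ℕ} {s : Finset (Fin M)} (hs : s.Nonempty) {x y : ℝ}
    (h : ∀ i ∈ s, x ≤ radius M i ∧ radius M i < y) : (#s : ℝ) ≤ M * (y - x) + 1 := by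
  have hM : (0 : ℝ) < M := by exact_mod_cast hs.choose.pos
  have key := card_le_of_forall_mem_Ico (s := s.map Fin.valEmbedding) (hs.map)
    (x := M * (x - 1)) (y := M * (y - 1)) (by
      simp only [mem_map, Fin.valEmbedding_apply, forall_exists_index, and_imp]
      rintro _ i hi rfl
      obtain ⟨hx, hy⟩ := h i hi
      unfold radius at hx hy
      exact ⟨(le_div_iff₀' hM).mp (by linarith), (div_lt_iff₀' hM).mp (by linarith)⟩)
  rw [card_map] at key
  linarith

lemma sub_div_mul_le {a b d x y : ℝ} (ha : 0 < a) (hb : 0 < b) (hd : 0 ≤ d) (hx : 0 ≤ x)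
    (hxa : x ≤ 2 * a) (hy : y ≤ x + d) (hab : a ≤ b + d) (hfar : 8 * d < a + b) :
    (y / b - x / a) * (a + b) ≤ 9 * d := by
  have hxab : x * (a - b) ≤ 2 * a * d := by
    rcases le_total a b with h | h <;> nlinarith
  have hgap : y / b - x / a ≤ 3 * d / b := by
    rw [div_sub_div _ _ hb.ne' ha.ne', div_le_div_iff₀ (by positivity) hb]
    have : y * a - b * x ≤ 3 * d * a := by nlinarith [mul_le_mul_of_nonneg_right hy ha.le]
    nlinarith [mul_le_mul_of_nonneg_right this hb.le]
  calc (y / b - x / a) * (a + b) ≤ 3 * d / b * (3 * b) := by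
        gcongr
        linarith
    _ = 9 * d := by field_simp; ring

variable {V : Type*} (dist : V → V → ℝ) {T : Finset V} (hT : T.Nonempty)

noncomputable def infDist (u : V) : ℝ := T.inf' hT (dist u ·)

variable {dist}

lemma infDist_nonneg (hM : IsMetric dist) (u : V) : 0 ≤ infDist dist hT u :=
  le_inf' _ _ fun t _ => hM.2.1 u t

variable (dist) in
lemma infDist_le (u : V) {t : V} (ht : t ∈ T) : infDist dist hT u ≤ dist u t :=
  inf'_le _ ht

variable (dist) in
lemma exists_dist_eq_infDist (u : V) : ∃ t ∈ T, infDist dist hT u = dist u t :=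
  exists_mem_eq_inf' hT _

lemma infDist_eq_zero_of_mem (hM : IsMetric dist) {t : V} (ht : t ∈ T) :
    infDist dist hT t = 0 :=
  (infDist_nonneg hT hM t).antisymm' ((infDist_le dist hT t ht).trans_eq (hM.1 t))

lemma infDist_le_dist_add (hM : IsMetric dist) (u v : V) :
    infDist dist hT u ≤ dist u v + infDist dist hT v := by
  obtain ⟨t, ht, heq⟩ := exists_dist_eq_infDist dist hT v
  rw [heq]
  exact (infDist_le dist hT u ht).trans (hM.2.2.2.1 u v t)

variable (dist) in
noncomputable def capture (r : ℝ) (u : V) : Finset T := {t | dist u t ≤ r * infDist dist hT u}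

@[simp]
lemma mem_capture {r : ℝ} {u : V} {t : T} :
    t ∈ capture dist hT r u ↔ dist u t ≤ r * infDist dist hT u := by
  simp [capture]

lemma capture_nonempty (hM : IsMetric dist) {r : ℝ} (hr : 1 ≤ r) (u : V) :
    (capture dist hT r u).Nonempty := by
  obtain ⟨t, ht, heq⟩ := exists_dist_eq_infDist dist hT u
  refine ⟨⟨t, ht⟩, ?_⟩
  rw [mem_capture, ← heq]
  exact le_mul_of_one_le_left (infDist_nonneg hT hM u) hr

variable (dist) in
/-- The fallback value is never used: capture sets are nonempty once `1 ≤ r`. -/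
noncomputable def assign {n : ℕ} (σ : T ≃ Fin n) (r : ℝ) (u : V) : T :=
  if h : (capture dist hT r u).Nonempty then Function.argminOn σ _ (coe_nonempty.mpr h)
  else ⟨_, hT.choose_spec⟩

variable {n : ℕ} (σ : T ≃ Fin n) {r : ℝ}

lemma assign_mem_capture (hM : IsMetric dist) (hr : 1 ≤ r) (u : V) :
    assign dist hT σ r u ∈ capture dist hT r u := by
  rw [assign, dif_pos (capture_nonempty hT hM hr u)]
  exact Function.argminOn_mem _ _ _

lemma assign_le (hM : IsMetric dist) (hr : 1 ≤ r) {u : V} {t : T}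
    (ht : t ∈ capture dist hT r u) : σ (assign dist hT σ r u) ≤ σ t := by
  rw [assign, dif_pos (capture_nonempty hT hM hr u)]
  exact Function.argminOn_le _ _ (mem_coe.mpr ht)

lemma dist_assign_le (hM : IsMetric dist) (hr : 1 ≤ r) (u : V) :
    dist u (assign dist hT σ r u) ≤ r * infDist dist hT u :=
  (mem_capture hT).mp (assign_mem_capture hT σ hM hr u)

lemma assign_of_mem (hM : IsMetric dist) (hr : 1 ≤ r) {t : V} (ht : t ∈ T) :
    (assign dist hT σ r t : V) = t := by
  have h := dist_assign_le hT σ hM hr t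
  rw [infDist_eq_zero_of_mem hT hM ht, mul_zero] at h
  exact (hM.2.2.2.2 _ _ (h.antisymm (hM.2.1 _ _))).symm

variable (dist) in
noncomputable def nearer (u : V) (t : T) : Finset T := {s | dist u s ≤ dist u t}

lemma assign_separates_of_lt (hM : IsMetric dist) (hr : 1 ≤ r) {u v : V}
    (h : σ (assign dist hT σ r u) < σ (assign dist hT σ r v)) :
    (∀ s ∈ nearer dist u (assign dist hT σ r u), σ (assign dist hT σ r u) ≤ σ s) ∧
      assign dist hT σ r u ∈ capture dist hT r u ∧ assign dist hT σ r u ∉ capture dist hT r v := by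
  have hu := assign_mem_capture hT σ hM hr u
  refine ⟨fun s hs => assign_le hT σ hM hr ?_, hu, fun hv => (assign_le hT σ hM hr hv).not_gt h⟩
  simp only [nearer, mem_filter, mem_univ, true_and] at hs
  exact (mem_capture hT).mpr (hs.trans ((mem_capture hT).mp hu))

lemma exists_resolution [Finite V] (hM : IsMetric dist) :
    ∃ M : ℕ, 0 < M ∧
      ∀ u v, u ≠ v → infDist dist hT u + infDist dist hT v ≤ M * dist u v := by
  obtain ⟨C, hC⟩ := Finite.exists_le fun p : V × V =>
    (infDist dist hT p.1 + infDist dist hT p.2) / dist p.1 p.2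
  obtain ⟨N, hN⟩ := exists_nat_ge C
  refine ⟨N + 1, N.succ_pos, fun u v huv => ?_⟩
  have hd : 0 < dist u v := (hM.2.1 u v).lt_of_ne fun h => huv (hM.2.2.2.2 u v h.symm)
  rw [← div_le_iff₀ hd]
  push_cast
  linarith [hC (u, v)]

variable (M : ℕ)

variable (dist) in
noncomputable def ckrMap (ω : (T ≃ Fin #T) × Fin M) : V → T :=
  assign dist hT ω.1 (radius M ω.2)

variable {M}

lemma ckrMap_of_mem (hM : IsMetric dist) (ω : (T ≃ Fin #T) × Fin M) {t : V} (ht : t ∈ T) :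
    (ckrMap dist hT M ω t : V) = t :=
  assign_of_mem hT ω.1 hM (one_le_radius ω.2) ht

lemma dist_ckrMap_le (hM : IsMetric dist) (ω : (T ≃ Fin #T) × Fin M) (u : V) :
    dist u (ckrMap dist hT M ω u) ≤ 2 * infDist dist hT u :=
  (dist_assign_le hT ω.1 hM (one_le_radius ω.2) u).trans
    (mul_le_mul_of_nonneg_right (radius_lt_two ω.2).le (infDist_nonneg hT hM u))

variable [DecidableEq V] (M)

variable (dist) in
noncomputable def cutEvent (u v : V) (t : T) : Finset ((T ≃ Fin #T) × Fin M) :=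
  ({σ : T ≃ Fin #T | ∀ s ∈ nearer dist u t, σ t ≤ σ s} : Finset _) ×ˢ
    ({i : Fin M | t ∈ capture dist hT (radius M i) u ∧ t ∉ capture dist hT (radius M i) v} :
      Finset _)

lemma filter_ckrMap_ne_subset (hM : IsMetric dist) (u v : V) :
    ({ω | ckrMap dist hT M ω u ≠ ckrMap dist hT M ω v} : Finset ((T ≃ Fin #T) × Fin M)) ⊆
      univ.biUnion fun t => cutEvent dist hT M u v t ∪ cutEvent dist hT M v u t := by
  rintro ⟨σ, i⟩ hω
  have hne : assign dist hT σ (radius M i) u ≠ assign dist hT σ (radius M i) v :=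
    (mem_filter.mp hω).2
  have hr := one_le_radius i
  rw [mem_biUnion]
  rcases lt_or_gt_of_ne (σ.injective.ne hne) with h | h
  · obtain ⟨hfirst, hu, hv⟩ := assign_separates_of_lt hT σ hM hr h
    exact ⟨_, mem_univ _, mem_union_left _ (mem_product.mpr ⟨by simpa using hfirst, by simp_all⟩)⟩
  · obtain ⟨hfirst, hv, hu⟩ := assign_separates_of_lt hT σ hM hr h
    exact ⟨_, mem_univ _, mem_union_right _ (mem_product.mpr ⟨by simpa using hfirst, by simp_all⟩)⟩

variable {M}

lemma card_radius_cut_mul_le (hM : IsMetric dist) {u v : V}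
    (hfar : 8 * dist u v < infDist dist hT u + infDist dist hT v)
    (hres : infDist dist hT u + infDist dist hT v ≤ M * dist u v) (t : T) :
    (#{i : Fin M | t ∈ capture dist hT (radius M i) u ∧ t ∉ capture dist hT (radius M i) v} : ℝ) *
        (infDist dist hT u + infDist dist hT v) ≤ 10 * M * dist u v := by
  set a := infDist dist hT u
  set b := infDist dist hT v
  set d := dist u v
  have hd : 0 ≤ d := hM.2.1 u v
  have hab : a ≤ b + d := by linarith [infDist_le_dist_add hT hM u v]
  have hba : b ≤ a + d := by linarith [infDist_le_dist_add hT hM v u, hM.2.2.1 v u]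
  have ha : 0 < a := by linarith
  have hb : 0 < b := by linarith
  rcases eq_empty_or_nonempty
    {i : Fin M | t ∈ capture dist hT (radius M i) u ∧ t ∉ capture dist hT (radius M i) v}
    with hempty | ⟨i₀, hi₀⟩
  · rw [hempty, card_empty, Nat.cast_zero, zero_mul]
    positivity
  have hcount := card_le_of_forall_radius_mem_Ico ⟨i₀, hi₀⟩
    (x := dist u t / a) (y := dist v t / b) fun i hi => by
      simp only [mem_filter, mem_univ, true_and, mem_capture, not_le] at hi
      exact ⟨(div_le_iff₀ ha).mpr hi.1, (lt_div_iff₀ hb).mpr hi.2⟩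
  simp only [mem_filter, mem_univ, true_and, mem_capture] at hi₀
  have hgap := sub_div_mul_le ha hb hd (hM.2.1 u t)
    (hi₀.1.trans (by nlinarith [radius_lt_two i₀]))
    (by linarith [hM.2.2.2.1 v u t, hM.2.2.1 v u]) hab hfar
  calc _ ≤ (M * (dist v t / b - dist u t / a) + 1) * (a + b) := by gcongr
    _ = M * ((dist v t / b - dist u t / a) * (a + b)) + (a + b) := by ring
    _ ≤ M * (9 * d) + M * d := by gcongr
    _ = 10 * M * d := by ring

lemma card_cutEvent_mul_le (hM : IsMetric dist) {u v : V}
    (hfar : 8 * dist u v < infDist dist hT u + infDist dist hT v)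
    (hres : infDist dist hT u + infDist dist hT v ≤ M * dist u v) (t : T) :
    (#(cutEvent dist hT M u v t) : ℝ) * (infDist dist hT u + infDist dist hT v) ≤
      Fintype.card (T ≃ Fin #T) * (#(nearer dist u t) : ℝ)⁻¹ * (10 * M * dist u v) := by
  have ht : t ∈ nearer dist u t := by simp [nearer]
  have hfirst := card_filter_forall_le_mul_card_le (n := #T) _ ht
  have hpos : (0 : ℝ) < #(nearer dist u t) := by exact_mod_cast card_pos.mpr ⟨t, ht⟩
  have hσ : (#{σ : T ≃ Fin #T | ∀ s ∈ nearer dist u t, σ t ≤ σ s} : ℝ) ≤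
      Fintype.card (T ≃ Fin #T) * (#(nearer dist u t) : ℝ)⁻¹ := by
    rw [← div_eq_mul_inv, le_div_iff₀ hpos]
    exact_mod_cast hfirst
  have hab : 0 ≤ infDist dist hT u + infDist dist hT v := by linarith [hM.2.1 u v]
  rw [cutEvent, card_product, Nat.cast_mul, mul_assoc]
  exact mul_le_mul hσ (card_radius_cut_mul_le hT hM hfar hres t) (by positivity) (by positivity)

lemma sum_inv_card_nearer_le (hk : 2 ≤ #T) (u : V) :
    ∑ t : T, (#(nearer dist u t) : ℝ)⁻¹ ≤ 3 * Real.log #T := by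
  have h := sum_inv_card_filter_le_harmonic (fun s : T => dist u s) univ
  rw [card_univ, Fintype.card_coe] at h
  exact h.trans (harmonic_le_three_mul_log hk)

lemma card_ckrMap_ne_mul_le_of_far (hM : IsMetric dist) (hk : 2 ≤ #T) {u v : V}
    (hfar : 8 * dist u v < infDist dist hT u + infDist dist hT v)
    (hres : infDist dist hT u + infDist dist hT v ≤ M * dist u v) :
    (#{ω | ckrMap dist hT M ω u ≠ ckrMap dist hT M ω v} : ℝ) *
        (infDist dist hT u + infDist dist hT v) ≤
      60 * Real.log #T * dist u v * (Fintype.card (T ≃ Fin #T) * M) := by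
  set a := infDist dist hT u
  set b := infDist dist hT v
  set d := dist u v
  set N := Fintype.card (T ≃ Fin #T)
  have hd : 0 ≤ d := hM.2.1 u v
  have hab : 0 ≤ a + b := by linarith
  have hvu : dist v u = d := hM.2.2.1 v u
  have hfar' : 8 * dist v u < b + a := by rw [hvu]; linarith
  have hres' : b + a ≤ M * dist v u := by rw [hvu]; linarith
  calc _ ≤ (∑ t : T, ((#(cutEvent dist hT M u v t) : ℝ) + #(cutEvent dist hT M v u t))) *
          (a + b) := by
        gcongr
        exact_mod_cast (card_le_card (filter_ckrMap_ne_subset hT M hM u v)).trans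
          (card_biUnion_le.trans (sum_le_sum fun t _ => card_union_le _ _))
    _ = ∑ t : T, ((#(cutEvent dist hT M u v t) : ℝ) * (a + b) +
          #(cutEvent dist hT M v u t) * (b + a)) := by
        rw [sum_mul]
        exact sum_congr rfl fun t _ => by ring
    _ ≤ ∑ t : T, (N * (#(nearer dist u t) : ℝ)⁻¹ * (10 * M * d) +
          N * (#(nearer dist v t) : ℝ)⁻¹ * (10 * M * dist v u)) :=
        sum_le_sum fun t _ => add_le_add (card_cutEvent_mul_le hT hM hfar hres t)
          (card_cutEvent_mul_le hT hM hfar' hres' t)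
    _ = 10 * M * d * N * (∑ t : T, (#(nearer dist u t) : ℝ)⁻¹ +
          ∑ t : T, (#(nearer dist v t) : ℝ)⁻¹) := by
        rw [hvu, mul_add, mul_sum, mul_sum, ← sum_add_distrib]
        exact sum_congr rfl fun t _ => by ring
    _ ≤ 10 * M * d * N * (3 * Real.log #T + 3 * Real.log #T) := by
        gcongr <;> exact sum_inv_card_nearer_le hk _
    _ = 60 * Real.log #T * d * (N * M) := by ring

theorem card_ckrMap_ne_mul_le (hM : IsMetric dist) (hk : 2 ≤ #T) {u v : V}
    (hres : infDist dist hT u + infDist dist hT v ≤ M * dist u v) :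
    (#{ω | ckrMap dist hT M ω u ≠ ckrMap dist hT M ω v} : ℝ) *
        (infDist dist hT u + infDist dist hT v) ≤
      60 * Real.log #T * dist u v * Fintype.card ((T ≃ Fin #T) × Fin M) := by
  rw [Fintype.card_prod, Fintype.card_fin, Nat.cast_mul]
  by_cases hfar : 8 * dist u v < infDist dist hT u + infDist dist hT v
  · exact card_ckrMap_ne_mul_le_of_far hT hM hk hfar hres
  set N := Fintype.card (T ≃ Fin #T)
  have hcard : (#{ω | ckrMap dist hT M ω u ≠ ckrMap dist hT M ω v} : ℝ) ≤ N * M := by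
    exact_mod_cast (card_filter_le _ _).trans_eq (by simp [N])
  have hlog : 8 ≤ 60 * Real.log #T := by
    have := Real.log_le_log two_pos (by exact_mod_cast hk : (2 : ℝ) ≤ #T)
    linarith [Real.log_two_gt_d9]
  have hd : 0 ≤ dist u v := hM.2.1 u v
  calc _ ≤ (N * M : ℝ) * (8 * dist u v) :=
        mul_le_mul hcard (not_lt.mp hfar)
          (add_nonneg (infDist_nonneg hT hM u) (infDist_nonneg hT hM v)) (by positivity)
    _ = (N * M * dist u v) * 8 := by ring
    _ ≤ (N * M * dist u v) * (60 * Real.log #T) := by gcongr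
    _ = 60 * Real.log #T * dist u v * (N * M) := by ring

theorem ckr_separation [Fintype V] (hM : IsMetric dist) (hk : 2 ≤ #T)
    (hres : ∀ u v, u ≠ v → infDist dist hT u + infDist dist hT v ≤ M * dist u v) (u v : V) :
    (∑ g ∈ univ.filter (fun g : V → T => g u ≠ g v), uniformLaw (ckrMap dist hT M) g) *
        (infDist dist hT u + infDist dist hT v) ≤ 60 * Real.log #T * dist u v := by
  rw [sum_filter_uniformLaw, div_mul_eq_mul_div]
  rcases eq_or_ne u v with rfl | huv
  · simp [hM.1 u]
  refine div_le_of_le_mul₀ (Nat.cast_nonneg _) ?_ ?_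
  · have := Real.log_nonneg (by exact_mod_cast (one_le_two.trans hk) : (1 : ℝ) ≤ #T)
    have := hM.2.1 u v
    positivity
  · exact (card_ckrMap_ne_mul_le hT hM hk (hres u v huv)).trans_eq (by ring)

end CKR

theorem ckr_partitioning :
    ∃ C : ℝ, 0 < C ∧
    ∀ (V : Type) [Fintype V] [DecidableEq V],
    ∀ (dist : V → V → ℝ) (T : Finset V) (hT : T.Nonempty),
      IsMetric dist → 2 ≤ T.card →
      ∃ p : (V → {x // x ∈ T}) → ℝ,
        (∀ g, 0 ≤ p g) ∧
        (∑ g, p g = 1) ∧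
        (∀ g, p g ≠ 0 → ∀ t (ht : t ∈ T), (g t : V) = t) ∧
        (∀ g, p g ≠ 0 → ∀ u : V,
          dist u (g u) ≤ 2 * T.inf' hT (fun t => dist u t)) ∧
        (∀ u v : V,
          (∑ g ∈ Finset.univ.filter (fun g : V → {x // x ∈ T} => g u ≠ g v), p g) *
              (T.inf' hT (fun t => dist u t) + T.inf' hT (fun t => dist v t)) ≤
            C * Real.log T.card * dist u v) := by
  refine ⟨60, by norm_num, fun V _ _ dist T hT hM hk => ?_⟩
  obtain ⟨M, hM0, hres⟩ := CKR.exists_resolution hT hM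
  have : Nonempty ((T ≃ Fin #T) × Fin M) :=
    ⟨(Fintype.equivFinOfCardEq (Fintype.card_coe T), ⟨0, hM0⟩)⟩
  refine ⟨uniformLaw (CKR.ckrMap dist hT M), uniformLaw_nonneg _, sum_uniformLaw _,
    fun g hg t ht => ?_, fun g hg u => ?_, CKR.ckr_separation hT hM hk hres⟩
  · obtain ⟨ω, rfl⟩ := exists_eq_of_uniformLaw_ne_zero hg
    exact CKR.ckrMap_of_mem hT hM ω ht
  · obtain ⟨ω, rfl⟩ := exists_eq_of_uniformLaw_ne_zero hg
    exact CKR.dist_ckrMap_le hT hM ω u
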